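/- Let g be a finite-dimensional Lie algebra, X a finite-dimensional vector space with a Lie algebra representation ρ': g → gl(X), and define on g* × ℝ × X* the bracket {f,g}(μ,z,α) = ⟨μ,[δf/δμ, δg/δμ]⟩ + ⟨μ,δf/δμ⟩∂g/∂z - ⟨μ,δg/δμ⟩∂f/∂z - f∂g/∂z + g∂f/∂z + ⟨α, ρ'_{δf/δμ}(δg/δα) - ρ'_{δg/δμ}(δf/δα)⟩. Then this bracket is bilinear and skew-symmetric, and if h is smooth, any curve (μ(t),z(t),α(t)) with μ' = ad*_{δh/δμ}μ - μ∂h/∂z - J_X(δh/δα, α), z' = ⟨μ,δh/δμ⟩ - h, α' = -ρ'*_{δh/δμ}(α) satisfies d/dt f(μ,z,α) = {h,f} - f ∂h/∂z for all smooth f. -/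

import Mathlib

set_option linter.unusedSectionVars false
set_option linter.unusedVariables false


/- `g` is a finite-dimensional real Lie algebra (finite-dimensional normed space
with a bilinear bracket `B`, alternating and Jacobi as hypotheses below) and `X` a
finite-dimensional real vector space carrying a Lie algebra representation
`ρ' : g → gl(X)`.  Duals are realized as continuous duals, and the phase space is
g* × ℝ × X*. -/
variable {g X : Type*} [NormedAddCommGroup g] [NormedSpace ℝ g] [FiniteDimensional ℝ g]
  [NormedAddCommGroup X] [NormedSpace ℝ X] [FiniteDimensional ℝ X]

/-- Phase space g* × ℝ × X*. -/
abbrev PhaseSp (g X : Type*) [NormedAddCommGroup g] [NormedSpace ℝ g]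
    [NormedAddCommGroup X] [NormedSpace ℝ X] :=
  (g →L[ℝ] ℝ) × ℝ × (X →L[ℝ] ℝ)

/-- The functional derivative δf/δμ ∈ g in the g*-variable. -/
noncomputable def deltaMu3 (f : PhaseSp g X → ℝ) (p : PhaseSp g X) : g :=
  (Module.evalEquiv ℝ g).symm <|
    (((fderiv ℝ f p).comp
        (ContinuousLinearMap.inl ℝ (g →L[ℝ] ℝ) (ℝ × (X →L[ℝ] ℝ)))).toLinearMap).comp
      ((LinearMap.toContinuousLinearMap : (g →ₗ[ℝ] ℝ) ≃ₗ[ℝ] (g →L[ℝ] ℝ)).toLinearMap)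

/-- The functional derivative δf/δα ∈ X in the X*-variable. -/
noncomputable def deltaAl (f : PhaseSp g X → ℝ) (p : PhaseSp g X) : X :=
  (Module.evalEquiv ℝ X).symm <|
    (((fderiv ℝ f p).comp
        ((ContinuousLinearMap.inr ℝ (g →L[ℝ] ℝ) (ℝ × (X →L[ℝ] ℝ))).comp
          (ContinuousLinearMap.inr ℝ ℝ (X →L[ℝ] ℝ)))).toLinearMap).comp
      ((LinearMap.toContinuousLinearMap : (X →ₗ[ℝ] ℝ) ≃ₗ[ℝ] (X →L[ℝ] ℝ)).toLinearMap)

/-- The partial derivative ∂f/∂z in the ℝ-variable. -/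
noncomputable def deltaZ3 (f : PhaseSp g X → ℝ) (p : PhaseSp g X) : ℝ :=
  fderiv ℝ f p (0, 1, 0)

/-- The Lie-Poisson-Jacobi bracket on g* × ℝ × X* (B the Lie bracket of g, ρ' the
representation):
{f,k}(μ,z,α) = ⟨μ,[δf/δμ, δk/δμ]⟩ + ⟨μ,δf/δμ⟩∂k/∂z - ⟨μ,δk/δμ⟩∂f/∂z
  - f∂k/∂z + k∂f/∂z + ⟨α, ρ'_{δf/δμ}(δk/δα) - ρ'_{δk/δμ}(δf/δα)⟩. -/
noncomputable def LPJBracket3 (B : g →ₗ[ℝ] g →ₗ[ℝ] g) (ρ' : g →ₗ[ℝ] X →ₗ[ℝ] X)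
    (f k : PhaseSp g X → ℝ) (p : PhaseSp g X) : ℝ :=
  p.1 (B (deltaMu3 f p) (deltaMu3 k p)) + p.1 (deltaMu3 f p) * deltaZ3 k p
    - p.1 (deltaMu3 k p) * deltaZ3 f p - f p * deltaZ3 k p + k p * deltaZ3 f p
    + p.2.2 (ρ' (deltaMu3 f p) (deltaAl k p) - ρ' (deltaMu3 k p) (deltaAl f p))

/-- The momentum map J_X : X × X* → g*, ⟨J_X(x,α), ξ⟩ = ⟨α, ρ'_ξ(x)⟩. -/
noncomputable def momJX (ρ' : g →ₗ[ℝ] X →ₗ[ℝ] X) (x : X) (α : X →L[ℝ] ℝ) :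
    g →L[ℝ] ℝ :=
  LinearMap.toContinuousLinearMap ((α.toLinearMap).comp (ρ'.flip x))

/-- ρ'*_ξ : X* → X*, characterized by ⟨ρ'*_ξ(α), x⟩ = -⟨α, ρ'_ξ(x)⟩. -/
noncomputable def coRho (ρ' : g →ₗ[ℝ] X →ₗ[ℝ] X) (ξ : g) (α : X →L[ℝ] ℝ) :
    X →L[ℝ] ℝ :=
  -(α.comp (LinearMap.toContinuousLinearMap (ρ' ξ)))

/-- The coadjoint operator ad*_ξ of g. -/
noncomputable def coad3 (B : g →ₗ[ℝ] g →ₗ[ℝ] g) (ξ : g) (μ : g →L[ℝ] ℝ) :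
    g →L[ℝ] ℝ :=
  μ.comp (LinearMap.toContinuousLinearMap (B ξ))

-- helper lemmas

lemma sep_dual {V : Type*} [NormedAddCommGroup V] [NormedSpace ℝ V]
    [FiniteDimensional ℝ V] (x y : V) (h : ∀ ν : V →L[ℝ] ℝ, ν x = ν y) : x = y := by
  apply (Module.evalEquiv ℝ V).injective
  ext φ
  simp only [Module.evalEquiv_apply, Module.Dual.eval_apply]
  have h2 := h (LinearMap.toContinuousLinearMap φ)
  simpa using h2

lemma deltaMu3_apply (f : PhaseSp g X → ℝ) (p : PhaseSp g X) (ν : g →L[ℝ] ℝ) :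
    ν (deltaMu3 f p) = fderiv ℝ f p (ν, 0, 0) := by
  have h := Module.apply_evalEquiv_symm_apply ℝ g ν.toLinearMap
    ((((fderiv ℝ f p).comp
        (ContinuousLinearMap.inl ℝ (g →L[ℝ] ℝ) (ℝ × (X →L[ℝ] ℝ)))).toLinearMap).comp
      ((LinearMap.toContinuousLinearMap : (g →ₗ[ℝ] ℝ) ≃ₗ[ℝ] (g →L[ℝ] ℝ)).toLinearMap))
  rw [deltaMu3]
  show ν.toLinearMap _ = _
  rw [h]
  congr 2

lemma deltaAl_apply (f : PhaseSp g X → ℝ) (p : PhaseSp g X) (β : X →L[ℝ] ℝ) :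
    β (deltaAl f p) = fderiv ℝ f p (0, 0, β) := by
  have h := Module.apply_evalEquiv_symm_apply ℝ X β.toLinearMap
    ((((fderiv ℝ f p).comp
        ((ContinuousLinearMap.inr ℝ (g →L[ℝ] ℝ) (ℝ × (X →L[ℝ] ℝ))).comp
          (ContinuousLinearMap.inr ℝ ℝ (X →L[ℝ] ℝ)))).toLinearMap).comp
      ((LinearMap.toContinuousLinearMap : (X →ₗ[ℝ] ℝ) ≃ₗ[ℝ] (X →L[ℝ] ℝ)).toLinearMap))
  rw [deltaAl]
  show β.toLinearMap _ = _
  rw [h]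
  congr 2

lemma fderiv_decomp (f : PhaseSp g X → ℝ) (p : PhaseSp g X)
    (ν : g →L[ℝ] ℝ) (t : ℝ) (β : X →L[ℝ] ℝ) :
    fderiv ℝ f p (ν, t, β)
      = fderiv ℝ f p (ν, 0, 0) + t * fderiv ℝ f p (0, 1, 0) + fderiv ℝ f p (0, 0, β) := by
  have : (ν, t, β) = (ν, (0:ℝ), (0 : X →L[ℝ] ℝ))
      + t • ((0 : g →L[ℝ] ℝ), (1:ℝ), (0 : X →L[ℝ] ℝ))
      + ((0 : g →L[ℝ] ℝ), (0:ℝ), β) := by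
    simp [Prod.ext_iff]
  rw [this, map_add, map_add, map_smul, smul_eq_mul]

lemma fderivAdd3 (f f' : PhaseSp g X → ℝ) (hf : Differentiable ℝ f)
    (hf' : Differentiable ℝ f') (p : PhaseSp g X) :
    fderiv ℝ (f + f') p = fderiv ℝ f p + fderiv ℝ f' p := by
  rw [show (f + f') = (fun x => f x + f' x) from rfl, fderiv_fun_add (hf p) (hf' p)]

lemma fderivSmul3 (f : PhaseSp g X → ℝ) (hf : Differentiable ℝ f) (a : ℝ)
    (p : PhaseSp g X) :
    fderiv ℝ (a • f) p = a • fderiv ℝ f p := by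
  rw [show (a • f) = (fun x => a • f x) from rfl, fderiv_fun_const_smul (hf p)]

lemma deltaMu3_add (f f' : PhaseSp g X → ℝ) (hf : Differentiable ℝ f)
    (hf' : Differentiable ℝ f') (p : PhaseSp g X) :
    deltaMu3 (f + f') p = deltaMu3 f p + deltaMu3 f' p := by
  apply sep_dual
  intro ν
  rw [deltaMu3_apply, fderivAdd3 f f' hf hf', map_add, deltaMu3_apply, deltaMu3_apply]
  simp

lemma deltaMu3_smul (f : PhaseSp g X → ℝ) (hf : Differentiable ℝ f) (a : ℝ)
    (p : PhaseSp g X) :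
    deltaMu3 (a • f) p = a • deltaMu3 f p := by
  apply sep_dual
  intro ν
  rw [deltaMu3_apply, fderivSmul3 f hf, map_smul, deltaMu3_apply]
  simp

lemma deltaAl_add (f f' : PhaseSp g X → ℝ) (hf : Differentiable ℝ f)
    (hf' : Differentiable ℝ f') (p : PhaseSp g X) :
    deltaAl (f + f') p = deltaAl f p + deltaAl f' p := by
  apply sep_dual
  intro ν
  rw [deltaAl_apply, fderivAdd3 f f' hf hf', map_add, deltaAl_apply, deltaAl_apply]
  simp

lemma deltaAl_smul (f : PhaseSp g X → ℝ) (hf : Differentiable ℝ f) (a : ℝ)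
    (p : PhaseSp g X) :
    deltaAl (a • f) p = a • deltaAl f p := by
  apply sep_dual
  intro ν
  rw [deltaAl_apply, fderivSmul3 f hf, map_smul, deltaAl_apply]
  simp

lemma deltaZ3_add (f f' : PhaseSp g X → ℝ) (hf : Differentiable ℝ f)
    (hf' : Differentiable ℝ f') (p : PhaseSp g X) :
    deltaZ3 (f + f') p = deltaZ3 f p + deltaZ3 f' p := by
  simp [deltaZ3, fderivAdd3 f f' hf hf']

lemma deltaZ3_smul (f : PhaseSp g X → ℝ) (hf : Differentiable ℝ f) (a : ℝ)
    (p : PhaseSp g X) :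
    deltaZ3 (a • f) p = a * deltaZ3 f p := by
  simp [deltaZ3, fderivSmul3 f hf]


/-- The bracket on g* × ℝ × X* is bilinear and skew-symmetric, and along any curve
(μ(t),z(t),α(t)) solving μ' = ad*_{δh/δμ}μ - μ∂h/∂z - J_X(δh/δα, α),
z' = ⟨μ,δh/δμ⟩ - h, α' = -ρ'*_{δh/δμ}(α), every smooth function f satisfies
d/dt f(μ,z,α) = {h,f} - f ∂h/∂z. -/
theorem LPJ3_skew_bilinear_and_evolution
    (B : g →ₗ[ℝ] g →ₗ[ℝ] g) (hBalt : ∀ x : g, B x x = 0)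
    (hBjac : ∀ x y z : g, B x (B y z) + B y (B z x) + B z (B x y) = 0)
    (ρ' : g →ₗ[ℝ] X →ₗ[ℝ] X)
    (hrep : ∀ ξ η : g, ρ' (B ξ η) = (ρ' ξ).comp (ρ' η) - (ρ' η).comp (ρ' ξ)) :
    (∀ (f k : PhaseSp g X → ℝ) (p : PhaseSp g X),
        LPJBracket3 B ρ' f k p = -LPJBracket3 B ρ' k f p) ∧
    (∀ (f f' k : PhaseSp g X → ℝ) (a : ℝ), Differentiable ℝ f → Differentiable ℝ f' →
      Differentiable ℝ k → ∀ p : PhaseSp g X,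
        LPJBracket3 B ρ' (f + f') k p = LPJBracket3 B ρ' f k p + LPJBracket3 B ρ' f' k p ∧
        LPJBracket3 B ρ' (a • f) k p = a * LPJBracket3 B ρ' f k p ∧
        LPJBracket3 B ρ' k (f + f') p = LPJBracket3 B ρ' k f p + LPJBracket3 B ρ' k f' p ∧
        LPJBracket3 B ρ' k (a • f) p = a * LPJBracket3 B ρ' k f p) ∧
    (∀ (h f : PhaseSp g X → ℝ), ContDiff ℝ (⊤ : ℕ∞) h → ContDiff ℝ (⊤ : ℕ∞) f →
      ∀ (μ : ℝ → g →L[ℝ] ℝ) (z : ℝ → ℝ) (α : ℝ → X →L[ℝ] ℝ),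
      (∀ t, HasDerivAt μ
        (coad3 B (deltaMu3 h (μ t, z t, α t)) (μ t)
          - deltaZ3 h (μ t, z t, α t) • μ t
          - momJX ρ' (deltaAl h (μ t, z t, α t)) (α t)) t) →
      (∀ t, HasDerivAt z
        ((μ t) (deltaMu3 h (μ t, z t, α t)) - h (μ t, z t, α t)) t) →
      (∀ t, HasDerivAt α (-(coRho ρ' (deltaMu3 h (μ t, z t, α t)) (α t))) t) →
      ∀ t, HasDerivAt (fun s => f (μ s, z s, α s))
        (LPJBracket3 B ρ' h f (μ t, z t, α t)
          - f (μ t, z t, α t) * deltaZ3 h (μ t, z t, α t)) t) := by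
  have hBanti : ∀ x y : g, B x y = -B y x := by
    intro x y
    have h1 := hBalt (x + y)
    simp only [map_add, LinearMap.add_apply, hBalt, zero_add, add_zero] at h1
    exact eq_neg_of_add_eq_zero_left (by rw [add_comm]; exact h1)
  refine ⟨?_, ?_, ?_⟩
  · intro f k p
    rw [LPJBracket3, LPJBracket3, hBanti (deltaMu3 f p) (deltaMu3 k p)]
    simp only [map_neg, map_sub]
    ring
  · intro f f' k a hf hf' hk p
    refine ⟨?_, ?_, ?_, ?_⟩
    · simp only [LPJBracket3, deltaMu3_add f f' hf hf' p, deltaAl_add f f' hf hf' p,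
        deltaZ3_add f f' hf hf' p, Pi.add_apply, map_add, LinearMap.add_apply, map_sub]
      ring
    · simp only [LPJBracket3, deltaMu3_smul f hf a p, deltaAl_smul f hf a p,
        deltaZ3_smul f hf a p, Pi.smul_apply, map_smul, LinearMap.smul_apply,
        smul_eq_mul, map_sub]
      ring
    · simp only [LPJBracket3, deltaMu3_add f f' hf hf' p, deltaAl_add f f' hf hf' p,
        deltaZ3_add f f' hf hf' p, Pi.add_apply, map_add, LinearMap.add_apply, map_sub]
      ring
    · simp only [LPJBracket3, deltaMu3_smul f hf a p, deltaAl_smul f hf a p,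
        deltaZ3_smul f hf a p, Pi.smul_apply, map_smul, LinearMap.smul_apply,
        smul_eq_mul, map_sub]
      ring
  · intro h f hh hf μ z α hμ hz hα t
    have hcurve : HasDerivAt (fun s => (μ s, z s, α s))
        (coad3 B (deltaMu3 h (μ t, z t, α t)) (μ t)
            - deltaZ3 h (μ t, z t, α t) • μ t
            - momJX ρ' (deltaAl h (μ t, z t, α t)) (α t),
          (μ t) (deltaMu3 h (μ t, z t, α t)) - h (μ t, z t, α t),
          -(coRho ρ' (deltaMu3 h (μ t, z t, α t)) (α t))) t :=
      (hμ t).prodMk ((hz t).prodMk (hα t))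
    have hfd : HasFDerivAt f (fderiv ℝ f (μ t, z t, α t)) (μ t, z t, α t) :=
      ((hf.differentiable (by simp)) (μ t, z t, α t)).hasFDerivAt
    have hcomp := hfd.comp_hasDerivAt t hcurve
    refine hcomp.congr_deriv ?_
    symm
    set p := (μ t, z t, α t) with hp
    rw [fderiv_decomp, ← deltaMu3_apply, ← deltaAl_apply]
    have e1 : (coad3 B (deltaMu3 h p) (μ t) - deltaZ3 h p • μ t
          - momJX ρ' (deltaAl h p) (α t)) (deltaMu3 f p)
        = (μ t) (B (deltaMu3 h p) (deltaMu3 f p))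
          - deltaZ3 h p * (μ t) (deltaMu3 f p)
          - (α t) (ρ' (deltaMu3 f p) (deltaAl h p)) := by
      simp [coad3, momJX, ContinuousLinearMap.sub_apply, mul_comm]
    have e2 : (-(coRho ρ' (deltaMu3 h p) (α t))) (deltaAl f p)
        = (α t) (ρ' (deltaMu3 h p) (deltaAl f p)) := by
      simp [coRho]
    rw [e1, e2]
    show _ = _ - _ - _ + (_ - _) * deltaZ3 f p + _
    simp only [LPJBracket3, map_sub]
    ring
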